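/- For n ≥ 3 define the n-qubit linear cluster state Lin_n : (Fin n → Fin 2) → ℂ by Lin_n(x) = 2^{-n/2}·(-1)^{∑_{i=0}^{n-2} x_i x_{i+1}}, and similarly Lin_{n-1} on n-1 qubits. Fix m ∈ {0,1}, and let H := (1/√2)·!![1,1;1,-1] and Z := !![1,0;0,-1]. Define w : (Fin (n-1) → Fin 2) → ℂ by contracting the second qubit of Lin_n with the σ_x eigenvector ⟨x_m| = (⟨0| + (-1)^m⟨1|)/√2: w(a, y) := ∑_{b ∈ Fin 2} (1/√2)·(-1)^{m·b} · Lin_n(a, b, y), where y ranges over qubits 3,…,n. Then applying Z^m·H to the first qubit of w gives exactly (1/√2)·Lin_{n-1}: for all (a', y), ∑_{a ∈ Fin 2} (Z^m·H)_{a',a} · w(a, y) = (1/√2)·Lin_{n-1}(a', y). -/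

import Mathlib

/-- The `n`-qubit linear cluster state amplitudes:
`Lin_n(x) = 2^{-n/2} · (-1)^{∑_{i=0}^{n-2} xᵢ·xᵢ₊₁}`, with `2^{-n/2} = (√2)⁻ⁿ`. -/
noncomputable def Lin (n : ℕ) (x : Fin n → Fin 2) : ℂ :=
  (((Real.sqrt 2)⁻¹ ^ n : ℝ) : ℂ) *
    (-1 : ℂ) ^ (∑ i : Fin (n - 1),
      ((x ⟨i.1, by have := i.isLt; omega⟩ : Fin 2) : ℕ) *
      ((x ⟨i.1 + 1, by have := i.isLt; omega⟩ : Fin 2) : ℕ))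

/-- The Hadamard gate `H = (1/√2)·!![1,1;1,-1]`. -/
noncomputable def Hgate : Matrix (Fin 2) (Fin 2) ℂ :=
  ((1 / Real.sqrt 2 : ℝ) : ℂ) • !![1, 1; 1, -1]

/-- The Pauli `Z` gate. -/
def Zgate : Matrix (Fin 2) (Fin 2) ℂ := !![1, 0; 0, -1]

/-- Insert a bit `b` as the second qubit of an `(n+2)`-qubit basis string,
producing an `(n+3)`-qubit basis string `(z₀, b, z₁, …, z_{n+1})`. -/
def insSnd (n : ℕ) (b : Fin 2) (z : Fin (n + 2) → Fin 2) : Fin (n + 3) → Fin 2 :=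
  fun i =>
    if i.1 = 0 then z ⟨0, by omega⟩
    else if i.1 = 1 then b
    else z ⟨i.1 - 1, by have := i.isLt; omega⟩

/-- The (subnormalized) post-measurement state obtained by contracting the second
qubit of `Lin_{n+3}` with the `σ_x` eigenvector `⟨x_m| = (⟨0| + (-1)^m ⟨1|)/√2`:
`w(a,y) = ∑_b (1/√2)·(-1)^{m·b}·Lin_{n+3}(a, b, y)`. -/
noncomputable def wX (n m : ℕ) (z : Fin (n + 2) → Fin 2) : ℂ :=
  ∑ b : Fin 2,
    (((Real.sqrt 2)⁻¹ : ℝ) : ℂ) * (-1 : ℂ) ^ (m * (b : ℕ)) * Lin (n + 3) (insSnd n b z)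

/-
Peeling the first qubit off a linear cluster state gives
`Lin_{k+2}(a, x) = 2^{-1/2} (-1)^{a x₀} Lin_{k+1}(x)`. Applying this twice, contracting the second
qubit with `⟨x_m|` leaves the chain `Lin_{n+1}(y)` on the last qubits times a two-bit kernel in
`(a, y₀)`, and `Z^m H` maps that kernel to `(-1)^{a' y₀}`, which is exactly the bond the first
qubit `a'` forms with `y₀` in `Lin_{n+2}(a', y)`.
-/

local notation "𝔠" => (((Real.sqrt 2)⁻¹ : ℝ) : ℂ)

lemma two_mul_invSqrtTwo_sq : 2 * 𝔠 ^ 2 = 1 := by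
  rw [← Complex.ofReal_pow, inv_pow, Real.sq_sqrt zero_le_two]
  push_cast
  norm_num

lemma Lin_cons (n : ℕ) (a : Fin 2) (x : Fin (n + 1) → Fin 2) :
    Lin (n + 2) (Fin.cons a x) = 𝔠 * (-1) ^ ((a : ℕ) * (x 0 : ℕ)) * Lin (n + 1) x := by
  unfold Lin
  push_cast
  rw [mul_mul_mul_comm, ← pow_succ', ← pow_add]
  congr 2
  exact Fin.sum_univ_succ _

lemma insSnd_cons (n : ℕ) (a b : Fin 2) (y : Fin (n + 1) → Fin 2) :
    insSnd n b (Fin.cons a y) = Fin.cons a (Fin.cons b y) := by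
  ext ⟨_ | _ | k, _⟩ <;> rfl

lemma Hgate_apply (i j : Fin 2) : Hgate i j = 𝔠 * (-1) ^ ((i : ℕ) * (j : ℕ)) := by
  fin_cases i <;> fin_cases j <;> simp [Hgate]

lemma Zgate_eq_diagonal : Zgate = Matrix.diagonal fun i : Fin 2 => (-1 : ℂ) ^ (i : ℕ) := by
  ext i j
  fin_cases i <;> fin_cases j <;> simp [Zgate]

lemma Zgate_pow_mul_Hgate_apply (m : ℕ) (i j : Fin 2) :
    (Zgate ^ m * Hgate) i j = 𝔠 * (-1) ^ (m * (i : ℕ)) * (-1) ^ ((i : ℕ) * (j : ℕ)) := by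
  rw [Zgate_eq_diagonal, Matrix.diagonal_pow, Matrix.diagonal_mul, Hgate_apply, Pi.pow_apply,
    ← pow_mul, mul_comm (i : ℕ) m]
  ring

/-- The amplitude left on qubits `a` and `e` after projecting their common neighbour `b`
onto `⟨x_m|`, given the bonds `a – b – e`. -/
noncomputable def xMeasKernel (m : ℕ) (a e : Fin 2) : ℂ :=
  ∑ b : Fin 2, 𝔠 * (-1) ^ (m * (b : ℕ)) * (-1) ^ ((a : ℕ) * (b : ℕ)) * (-1) ^ ((b : ℕ) * (e : ℕ))

lemma sum_Zgate_pow_mul_Hgate_mul_xMeasKernel (m : ℕ) (a' e : Fin 2) :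
    ∑ a : Fin 2, (Zgate ^ m * Hgate) a' a * xMeasKernel m a e = (-1) ^ ((a' : ℕ) * (e : ℕ)) := by
  have hc := two_mul_invSqrtTwo_sq
  have hsign : ((-1 : ℂ) ^ m) ^ 2 = 1 := by rw [← pow_mul, pow_mul', neg_one_sq, one_pow]
  simp only [xMeasKernel, Fin.sum_univ_two, Zgate_pow_mul_Hgate_apply]
  fin_cases a' <;> fin_cases e <;> simp only [Fin.isValue, Fin.coe_ofNat_eq_mod,
    Nat.zero_mod, Nat.mod_succ, mul_zero, mul_one, pow_zero, pow_one, mul_neg, neg_mul, neg_neg]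
  · linear_combination hc
  · linear_combination hc
  · linear_combination 2 * 𝔠 ^ 2 * hsign + hc
  · linear_combination -2 * 𝔠 ^ 2 * hsign - hc

lemma wX_cons (n m : ℕ) (a : Fin 2) (y : Fin (n + 1) → Fin 2) :
    wX n m (Fin.cons a y) = 𝔠 ^ 2 * Lin (n + 1) y * xMeasKernel m a (y 0) := by
  simp only [wX, xMeasKernel, insSnd_cons, Lin_cons, Fin.cons_zero, Finset.mul_sum]
  refine Finset.sum_congr rfl fun b _ => ?_
  ring

theorem stmt_13_general (n m : ℕ) (x' : Fin (n + 2) → Fin 2) :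
    ∑ a : Fin 2, (Zgate ^ m * Hgate) (x' 0) a * wX n m (Function.update x' 0 a)
      = (((Real.sqrt 2)⁻¹ : ℝ) : ℂ) * Lin (n + 2) x' := by
  induction x' using Fin.consCases with | cons a' y => ?_
  simp only [Fin.cons_zero, Fin.update_cons_zero, wX_cons, Lin_cons]
  simp_rw [mul_left_comm _ (𝔠 ^ 2 * Lin (n + 1) y), ← Finset.mul_sum,
    sum_Zgate_pow_mul_Hgate_mul_xMeasKernel]
  ring

/-- for `n + 3 ≥ 3` qubits: measuring the second qubit of a linear
cluster chain in the `σ_x` basis with outcome `m ∈ {0,1}` and applying the local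
correction `Z^m·H` to the first qubit yields `(1/√2)·Lin_{n+2}`:
`∑_a (Z^m·H)_{a',a} · w(a, y) = (1/√2)·Lin_{n+2}(a', y)` for all `(a', y)`. -/
theorem stmt_13 (n m : ℕ) (hm : m = 0 ∨ m = 1) (x' : Fin (n + 2) → Fin 2) :
    ∑ a : Fin 2, (Zgate ^ m * Hgate) (x' 0) a * wX n m (Function.update x' 0 a)
      = (((Real.sqrt 2)⁻¹ : ℝ) : ℂ) * Lin (n + 2) x' :=
  stmt_13_general n m x'
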